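/- With H, T as above (H symmetric positive semidefinite, H = D − L − Lᵀ, T symmetric positive definite block diagonal and 2T⁻¹ ≻ D), the matrix M = (T⁻¹ − L)⁻¹(T⁻¹ − D + Lᵀ) satisfies ρ(M) ≤ 1. (Obtained by applying the positive-definite case to H + εI and letting ε → 0, using continuity of eigenvalues.) -/

import Mathlib

/-! Write `A = T⁻¹ - L` and `B = T⁻¹ - D + Lᵀ`, so that `A - B = H` and `A + Bᵀ = 2T⁻¹ - D`.
If `B v = μ A v` with `v ≠ 0`, put `a = v* A v` and `b = v* B v = μ a`. Then `a - b = v* H v ≥ 0`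
and `a + conj b = v* (2T⁻¹ - D) v > 0` are real, so `a` and `b` share their imaginary part while
`re a ≥ |re b|` and `re a > 0`. Hence `|μ| |a| = |b| ≤ |a|` with `a ≠ 0`; the same computation
with `B v` replaced by `0` shows that `A` is invertible. The identity for `A + Bᵀ` uses that `T⁻¹`
is symmetric, which follows from the symmetry of `2T⁻¹ - D` and of `D = H + L + Lᵀ`. -/

open Matrix

/-- The spectral radius of a real matrix: the supremum of the absolute values of its
(complex) eigenvalues. -/
noncomputable def specRad {n : ℕ} (A : Matrix (Fin n) (Fin n) ℝ) : ℝ :=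
  sSup ((‖·‖ : ℂ → ℝ) '' spectrum ℂ (A.map (algebraMap ℝ ℂ)))

open ComplexConjugate

open scoped ComplexOrder

namespace RCLike
variable {𝕜 : Type*} [RCLike 𝕜] {a b : 𝕜}

lemma re_pos_of_le_of_pos_add_conj (hba : b ≤ a) (hpos : 0 < a + conj b) : 0 < re a := by
  rw [le_iff_re_im] at hba
  rw [pos_iff] at hpos
  simp only [map_add, conj_re] at hpos
  linarith [hba.1, hpos.1]

lemma norm_le_norm_of_le_of_nonneg_add_conj (hba : b ≤ a) (hnonneg : 0 ≤ a + conj b) :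
    ‖b‖ ≤ ‖a‖ := by
  rw [le_iff_re_im] at hba
  rw [nonneg_iff] at hnonneg
  simp only [map_add, conj_re] at hnonneg
  refine (pow_le_pow_iff_left₀ (norm_nonneg _) (norm_nonneg _) two_ne_zero).mp ?_
  rw [norm_sq_eq_def, norm_sq_eq_def, hba.2]
  nlinarith [hba.1, hnonneg.1]

end RCLike

namespace Matrix

lemma exists_mulVec_eq_smul_of_mem_spectrum {K n : Type*} [Field K] [Fintype n] [DecidableEq n]
    {M : Matrix n n K} {μ : K} (hμ : μ ∈ spectrum K M) : ∃ v ≠ 0, M *ᵥ v = μ • v := by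
  rw [← spectrum_toLin', ← Module.End.hasEigenvalue_iff_mem_spectrum] at hμ
  obtain ⟨v, hv⟩ := hμ.exists_hasEigenvector
  exact ⟨v, hv.2, by simpa using hv.apply_eq_smul⟩

lemma star_star_dotProduct_mulVec {R n : Type*} [CommSemiring R] [StarRing R] [Fintype n]
    (B : Matrix n n R) (v : n → R) : star (star v ⬝ᵥ B *ᵥ v) = star v ⬝ᵥ Bᴴ *ᵥ v := by
  rw [star_dotProduct, star_star, star_mulVec, dotProduct_mulVec]

section RCLike
variable {𝕜 n : Type*} [RCLike 𝕜] [Fintype n] {A B : Matrix n n 𝕜}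

lemma star_dotProduct_mulVec_le_of_posSemidef_sub (hsub : (A - B).PosSemidef) (v : n → 𝕜) :
    star v ⬝ᵥ B *ᵥ v ≤ star v ⬝ᵥ A *ᵥ v := by
  simpa [sub_mulVec, dotProduct_sub] using hsub.dotProduct_mulVec_nonneg v

lemma star_dotProduct_mulVec_add_conj (v : n → 𝕜) :
    star v ⬝ᵥ A *ᵥ v + conj (star v ⬝ᵥ B *ᵥ v) = star v ⬝ᵥ (A + Bᴴ) *ᵥ v := by
  rw [← RCLike.star_def, star_star_dotProduct_mulVec, add_mulVec, dotProduct_add]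

lemma re_star_dotProduct_mulVec_pos (hsub : (A - B).PosSemidef) (hadd : (A + Bᴴ).PosDef)
    {v : n → 𝕜} (hv : v ≠ 0) : 0 < RCLike.re (star v ⬝ᵥ A *ᵥ v) := by
  have hpos := hadd.dotProduct_mulVec_pos hv
  rw [← star_dotProduct_mulVec_add_conj] at hpos
  exact RCLike.re_pos_of_le_of_pos_add_conj
    (star_dotProduct_mulVec_le_of_posSemidef_sub hsub v) hpos

lemma norm_star_dotProduct_mulVec_le (hsub : (A - B).PosSemidef) (hadd : (A + Bᴴ).PosSemidef)
    (v : n → 𝕜) : ‖star v ⬝ᵥ B *ᵥ v‖ ≤ ‖star v ⬝ᵥ A *ᵥ v‖ := by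
  have hnonneg := hadd.dotProduct_mulVec_nonneg v
  rw [← star_dotProduct_mulVec_add_conj] at hnonneg
  exact RCLike.norm_le_norm_of_le_of_nonneg_add_conj
    (star_dotProduct_mulVec_le_of_posSemidef_sub hsub v) hnonneg

lemma isUnit_of_posSemidef_sub_of_posDef_add [DecidableEq n] (hsub : (A - B).PosSemidef)
    (hadd : (A + Bᴴ).PosDef) : IsUnit A := by
  rw [isUnit_iff_isUnit_det, isUnit_iff_ne_zero]
  intro hdet
  obtain ⟨v, hv, hAv⟩ := exists_mulVec_eq_zero_iff.mpr hdet
  simpa [hAv] using re_star_dotProduct_mulVec_pos hsub hadd hv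

lemma norm_le_one_of_mulVec_eq_smul_mulVec (hsub : (A - B).PosSemidef) (hadd : (A + Bᴴ).PosDef)
    {v : n → 𝕜} (hv : v ≠ 0) {μ : 𝕜} (hμ : B *ᵥ v = μ • A *ᵥ v) : ‖μ‖ ≤ 1 := by
  have ha : 0 < ‖star v ⬝ᵥ A *ᵥ v‖ :=
    norm_pos_iff.mpr fun h ↦ by simpa [h] using re_star_dotProduct_mulVec_pos hsub hadd hv
  have hb := norm_star_dotProduct_mulVec_le hsub hadd.posSemidef v
  rw [hμ, dotProduct_smul, norm_smul] at hb
  exact (mul_le_iff_le_one_left ha).mp hb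

lemma norm_le_one_of_mem_spectrum [DecidableEq n] (hsub : (A - B).PosSemidef)
    (hadd : (A + Bᴴ).PosDef) {M : Matrix n n 𝕜} (hM : A * M = B) {μ : 𝕜}
    (hμ : μ ∈ spectrum 𝕜 M) : ‖μ‖ ≤ 1 := by
  obtain ⟨v, hv, hMv⟩ := exists_mulVec_eq_smul_of_mem_spectrum hμ
  refine norm_le_one_of_mulVec_eq_smul_mulVec hsub hadd hv ?_
  rw [← hM, ← mulVec_mulVec, hMv, mulVec_smul]

end RCLike

section ofReal
variable {n : Type*} [Fintype n]

lemma re_star_dotProduct_map_ofReal_mulVec (S : Matrix n n ℝ) (v : n → ℂ) :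
    (star v ⬝ᵥ S.map (algebraMap ℝ ℂ) *ᵥ v).re =
      (fun i ↦ (v i).re) ⬝ᵥ S *ᵥ (fun i ↦ (v i).re) +
        (fun i ↦ (v i).im) ⬝ᵥ S *ᵥ (fun i ↦ (v i).im) := by
  simp only [dotProduct, mulVec, Finset.mul_sum, Complex.re_sum, ← Finset.sum_add_distrib]
  refine Finset.sum_congr rfl fun i _ ↦ Finset.sum_congr rfl fun j _ ↦ ?_
  simp

lemma PosSemidef.map_ofReal {S : Matrix n n ℝ} (hS : S.PosSemidef) :
    (S.map (algebraMap ℝ ℂ)).PosSemidef := by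
  have hherm : (S.map (algebraMap ℝ ℂ)).IsHermitian := hS.isHermitian.map _ fun _ ↦ by simp
  refine .of_dotProduct_mulVec_nonneg hherm fun v ↦
    RCLike.nonneg_iff.mpr ⟨?_, hherm.im_star_dotProduct_mulVec_self v⟩
  rw [RCLike.re_to_complex, re_star_dotProduct_map_ofReal_mulVec]
  exact add_nonneg (by simpa using hS.dotProduct_mulVec_nonneg _)
    (by simpa using hS.dotProduct_mulVec_nonneg _)

lemma PosDef.map_ofReal [DecidableEq n] {S : Matrix n n ℝ} (hS : S.PosDef) :
    (S.map (algebraMap ℝ ℂ)).PosDef := by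
  refine hS.posSemidef.map_ofReal.posDef_iff_det_ne_zero.mpr ?_
  rw [← RingHom.mapMatrix_apply, ← RingHom.map_det]
  simpa using hS.det_pos.ne'

end ofReal

end Matrix

theorem specRad_inv_mul_le_one {n : ℕ} {A B : Matrix (Fin n) (Fin n) ℝ}
    (hsub : (A - B).PosSemidef) (hadd : (A + Bᵀ).PosDef) : specRad (A⁻¹ * B) ≤ 1 := by
  rw [← conjTranspose_eq_transpose_of_trivial] at hadd
  have hA : IsUnit A.det := (isUnit_iff_isUnit_det A).mp
    (isUnit_of_posSemidef_sub_of_posDef_add hsub hadd)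
  have hsubℂ := hsub.map_ofReal
  have haddℂ := hadd.map_ofReal
  rw [Matrix.map_sub _ (map_sub _)] at hsubℂ
  rw [Matrix.map_add _ (map_add _), conjTranspose_map _ (fun _ ↦ by simp)] at haddℂ
  have hM : A.map (algebraMap ℝ ℂ) * (A⁻¹ * B).map (algebraMap ℝ ℂ) =
      B.map (algebraMap ℝ ℂ) := by
    rw [← Matrix.map_mul, ← Matrix.mul_assoc, mul_nonsing_inv _ hA, Matrix.one_mul]
  refine Real.sSup_le ?_ zero_le_one
  rintro _ ⟨μ, hμ, rfl⟩
  exact norm_le_one_of_mem_spectrum hsubℂ haddℂ hM hμ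

theorem stmt10_general {n : ℕ}
    (H D L T : Matrix (Fin n) (Fin n) ℝ)
    (hH : H.PosSemidef)
    (hdecomp : H = D - L - Lᵀ)
    (hOR : ((2 : ℝ) • T⁻¹ - D).PosDef) :
    specRad ((T⁻¹ - L)⁻¹ * (T⁻¹ - D + Lᵀ)) ≤ 1 := by
  have hHt : Hᵀ = H := by
    simpa only [conjTranspose_eq_transpose_of_trivial] using hH.isHermitian.eq
  have hDt : Dᵀ = D := by
    rw [show D = H + L + Lᵀ by rw [hdecomp]; abel, transpose_add, transpose_add, hHt,
      transpose_transpose]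
    abel
  have hQt : (T⁻¹)ᵀ = T⁻¹ := by
    have h := hOR.isHermitian.eq
    rw [conjTranspose_eq_transpose_of_trivial, transpose_sub, transpose_smul, hDt,
      sub_left_inj] at h
    exact smul_right_injective _ two_ne_zero h
  apply specRad_inv_mul_le_one
  · convert hH using 1
    rw [hdecomp]
    abel
  · convert hOR using 1
    rw [transpose_add, transpose_sub, hQt, hDt, transpose_transpose]
    module

theorem stmt10 {n q : ℕ} (blk : Fin n → Fin q)
    (H D L T : Matrix (Fin n) (Fin n) ℝ)
    (hH : H.PosSemidef)
    (hdecomp : H = D - L - Lᵀ)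
    (hDblk : ∀ j k, blk j ≠ blk k → D j k = 0)
    (hLlow : ∀ j k, ¬ blk k < blk j → L j k = 0)
    (hT : T.PosDef)
    (hTblk : ∀ j k, blk j ≠ blk k → T j k = 0)
    (hOR : ((2 : ℝ) • T⁻¹ - D).PosDef) :
    specRad ((T⁻¹ - L)⁻¹ * (T⁻¹ - D + Lᵀ)) ≤ 1 :=
  stmt10_general H D L T hH hdecomp hOR
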